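/- Every element w of the rook monoid R_n admits a factorization w = w_1·e_j·w_2 where e_j is the partial identity on {1,…,j} for some 0 ≤ j ≤ n, and w_1, w_2 are permutations in S_n; moreover one can choose w_1 and w_2 so that the length function satisfies ℓ(w) = ℓ(w_1) + ℓ(w_2), where ℓ on S_n is the Coxeter length. -/

import Mathlib

open scoped Classical

abbrev Rook (n : ℕ) : Type := Fin n ≃. Fin n

instance rookMonoid (n : ℕ) : Monoid (Rook n) where
  mul f g := f.trans g
  one := PEquiv.refl (Fin n)
  mul_assoc := PEquiv.trans_assoc
  one_mul := PEquiv.refl_trans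
  mul_one := PEquiv.trans_refl

noncomputable def egen (n j : ℕ) : Rook n :=
  PEquiv.ofSet {x : Fin n | (x : ℕ) < j}

noncomputable def sgen (n i : ℕ) (h1 : 1 ≤ i) (h2 : i ≤ n - 1) : Rook n :=
  (Equiv.swap (⟨i - 1, by omega⟩ : Fin n) ⟨i, by omega⟩).toPEquiv

def IsSGen (n : ℕ) (x : Rook n) : Prop :=
  ∃ (i : ℕ) (h1 : 1 ≤ i) (h2 : i ≤ n - 1), x = sgen n i h1 h2

def IsEGen (n : ℕ) (x : Rook n) : Prop := ∃ j ≤ n - 1, x = egen n j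

noncomputable def wt (n : ℕ) (x : Rook n) : ℕ := if IsSGen n x then 1 else 0

noncomputable def rookLength (n : ℕ) (w : Rook n) : ℕ :=
  sInf {k | ∃ l : List (Rook n), (∀ x ∈ l, IsSGen n x ∨ IsEGen n x) ∧
    l.prod = w ∧ k = (l.map (wt n)).sum}

noncomputable def coxLength (n : ℕ) (p : Equiv.Perm (Fin n)) : ℕ :=
  (Finset.univ.filter (fun q : Fin n × Fin n => q.1 < q.2 ∧ p q.2 < p q.1)).card

/-!
Multiplying a factorization `w₁ e_j w₂` on the left by a generator keeps it of that shape
without letting `ℓ(w₁) + ℓ(w₂)` grow by more than the weight of the generator: for `s_i` this is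
subadditivity of the Coxeter length, and for `e_m` it is the identity
`e_m σ e_j = u e_k v` with `ℓ(u) + ℓ(v) ≤ ℓ(σ)`. Here `e_m σ e_j` is `σ` restricted to
`A = {x | x < m, σ x < j}`, `u` sorts `A` to the front stably, and every inversion of `u`
(a pair `x < y` with `x ∉ A`, `y ∈ A`) is already an inversion of `σ`. Starting from a word of
minimal weight for `w` this yields a factorization with `ℓ(w₁) + ℓ(w₂) ≤ ℓ(w)`; conversely
reduced words for `w₁` and `w₂` around `e_j` give a word for `w` of weight `ℓ(w₁) + ℓ(w₂)`.
-/

open Finset Equiv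

namespace Rook

variable {n : ℕ}

def inversions (p : Perm (Fin n)) : Finset (Fin n × Fin n) :=
  {q | q.1 < q.2 ∧ p q.2 < p q.1}

@[simp]
lemma mem_inversions {p : Perm (Fin n)} {q : Fin n × Fin n} :
    q ∈ inversions p ↔ q.1 < q.2 ∧ p q.2 < p q.1 := by
  simp [inversions]

lemma coxLength_eq_card_inversions (p : Perm (Fin n)) : coxLength n p = #(inversions p) := rfl

lemma coxLength_one : coxLength n 1 = 0 := by
  rw [coxLength_eq_card_inversions, card_eq_zero, eq_empty_iff_forall_notMem]
  exact fun q hq => lt_asymm (mem_inversions.1 hq).1 (mem_inversions.1 hq).2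

lemma coxLength_mul_le (p q : Perm (Fin n)) :
    coxLength n (p * q) ≤ coxLength n p + coxLength n q := by
  have hsub : inversions (p * q) ⊆
      (inversions p).image (fun t => (q⁻¹ t.1, q⁻¹ t.2)) ∪ inversions q := by
    intro t ht
    rw [mem_inversions] at ht
    rcases lt_or_gt_of_ne (q.injective.ne ht.1.ne) with hq | hq
    · exact mem_union_left _ (mem_image.2 ⟨(q t.1, q t.2), by simpa [hq] using ht.2, by simp⟩)
    · exact mem_union_right _ (mem_inversions.2 ⟨ht.1, hq⟩)
  exact (card_le_card hsub).trans <|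
    (card_union_le _ _).trans (Nat.add_le_add_right card_image_le _)

lemma coxLength_add_le_of_inversions_subset {u v : Perm (Fin n)}
    (h : inversions u ⊆ inversions (v * u)) :
    coxLength n v + coxLength n u ≤ coxLength n (v * u) := by
  set f : Fin n × Fin n → Fin n × Fin n := fun t => (u.symm t.1, u.symm t.2)
  have hf : Set.InjOn f (inversions v) := fun s _ t _ hst => by
    simp only [f, Prod.mk.injEq, EmbeddingLike.apply_eq_iff_eq] at hst
    exact Prod.ext hst.1 hst.2
  have hmaps : ∀ t ∈ inversions v, f t ∈ inversions (v * u) ∧ f t ∉ inversions u := by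
    intro t ht
    rw [mem_inversions] at ht
    have hlt : u.symm t.1 < u.symm t.2 := by
      refine lt_of_le_of_ne (not_lt.1 fun hgt => ?_) (u.symm.injective.ne ht.1.ne)
      have := h (mem_inversions (q := (u.symm t.2, u.symm t.1)) |>.2 ⟨hgt, by simpa using ht.1⟩)
      exact lt_asymm ht.2 (by simpa using (mem_inversions.1 this).2)
    simp [f, hlt, ht.2, ht.1.le]
  have hdisj : Disjoint ((inversions v).image f) (inversions u) :=
    disjoint_left.2 fun t ht => by
      obtain ⟨s, hs, rfl⟩ := mem_image.1 ht
      exact (hmaps s hs).2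
  have hsub : (inversions v).image f ∪ inversions u ⊆ inversions (v * u) :=
    union_subset (fun t ht => by obtain ⟨s, hs, rfl⟩ := mem_image.1 ht; exact (hmaps s hs).1) h
  calc coxLength n v + coxLength n u = #((inversions v).image f ∪ inversions u) := by
        rw [card_union_of_disjoint hdisj, card_image_of_injOn hf]; rfl
    _ ≤ coxLength n (v * u) := card_le_card hsub

lemma inversions_swap {a b : Fin n} (hab : (b : ℕ) = a + 1) :
    inversions (swap a b) = {(a, b)} := by
  ext ⟨x, y⟩
  simp only [mem_inversions, mem_singleton, Prod.mk.injEq, swap_apply_def]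
  split_ifs <;> simp only [Fin.lt_def, Fin.ext_iff] at * <;> omega

lemma coxLength_swap {a b : Fin n} (hab : (b : ℕ) = a + 1) : coxLength n (swap a b) = 1 := by
  rw [coxLength_eq_card_inversions, inversions_swap hab, card_singleton]

lemma exists_descent {p : Perm (Fin n)} (hp : p ≠ 1) :
    ∃ a b : Fin n, (b : ℕ) = a + 1 ∧ p b < p a := by
  replace hp : ¬ Monotone p := mt (Perm.monotone_iff p).1 hp
  cases n with
  | zero => exact absurd (fun x => x.elim0) hp
  | succ m =>
    rw [Fin.monotone_iff_le_succ] at hp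
    push Not at hp
    obtain ⟨i, hi⟩ := hp
    exact ⟨i.castSucc, i.succ, by simp, hi⟩

lemma coxLength_mul_swap_lt {p : Perm (Fin n)} {a b : Fin n} (hab : (b : ℕ) = a + 1)
    (hd : p b < p a) : coxLength n (p * swap a b) < coxLength n p := by
  have hlt : a < b := Fin.lt_def.2 (by omega)
  have h := coxLength_add_le_of_inversions_subset (u := swap a b) (v := p * swap a b) (by
    rw [inversions_swap hab, mul_assoc, swap_mul_self, mul_one, singleton_subset_iff]
    exact mem_inversions.2 ⟨hlt, hd⟩)
  rw [coxLength_swap hab, mul_assoc, swap_mul_self, mul_one] at h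
  omega

/-- The permutation moving `A` onto the initial segment `{0, …, #A - 1}` and `Aᶜ` onto the
rest, preserving the order inside `A` and inside `Aᶜ`. -/
noncomputable def sortPerm (A : Finset (Fin n)) : Perm (Fin n) :=
  (Tuple.sort fun x => decide (x ∉ A))⁻¹

lemma sortPerm_lt_card_iff (A : Finset (Fin n)) (x : Fin n) :
    (sortPerm A x : ℕ) < #A ↔ x ∈ A := by
  obtain ⟨hmono, -⟩ := Tuple.eq_sort_iff.1 (rfl : Tuple.sort (fun x => decide (x ∉ A)) = _)
  rw [sortPerm]
  generalize Tuple.sort (fun x => decide (x ∉ A)) = σ at hmono ⊢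
  have hcard : #{i | σ i ∈ A} = #A := by
    rw [← card_map σ.toEmbedding]
    congr 1
    ext y
    simp
  have key := Fin.lt_card_filter_univ_iff_apply_of_imp (j := σ⁻¹ x) (fun i => σ i ∈ A)
    (fun i j hji hi => by simpa [Bool.le_iff_imp, hi] using hmono hji)
  simpa [hcard] using key

lemma mem_of_mem_inversions_sortPerm {A : Finset (Fin n)} {x y : Fin n}
    (h : (x, y) ∈ inversions (sortPerm A)) : x ∉ A ∧ y ∈ A := by
  obtain ⟨hmono, hstable⟩ :=
    Tuple.eq_sort_iff.1 (rfl : Tuple.sort (fun x => decide (x ∉ A)) = _)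
  rw [sortPerm] at h
  generalize Tuple.sort (fun x => decide (x ∉ A)) = σ at hmono hstable h
  obtain ⟨hxy, hlt⟩ := mem_inversions.1 h
  have hle : decide (y ∉ A) ≤ decide (x ∉ A) := by simpa using hmono hlt.le
  have hne : decide (y ∉ A) ≠ decide (x ∉ A) := fun he =>
    lt_asymm hxy (by simpa using hstable _ _ hlt (by simpa using he))
  exact (by simpa [Bool.lt_iff] using lt_of_le_of_ne hle hne : y ∈ A ∧ x ∉ A).symm

lemma mul_apply (f g : Rook n) (x : Fin n) : (f * g) x = (f x).bind g := rfl

lemma egen_apply (j : ℕ) (x : Fin n) : egen n j x = if (x : ℕ) < j then some x else none := rfl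

lemma egen_self : egen n n = 1 :=
  PEquiv.ext fun x => by simp [egen_apply, x.isLt]; rfl

lemma toPEquiv_mul_toPEquiv (p q : Perm (Fin n)) :
    (p.toPEquiv * q.toPEquiv : Rook n) = (q * p).toPEquiv := by
  rw [Perm.mul_def, toPEquiv_trans]
  rfl

lemma toPEquiv_mul_egen_mul_toPEquiv_apply (p q : Perm (Fin n)) (k : ℕ) (x : Fin n) :
    (p.toPEquiv * egen n k * q.toPEquiv : Rook n) x =
      if (p x : ℕ) < k then some (q (p x)) else none := by
  simp only [mul_apply, toPEquiv_apply, Option.bind_some, egen_apply]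
  split_ifs <;> rfl

lemma eq_sortPerm_mul_egen_card_mul {w : Rook n} {σ : Perm (Fin n)} {A : Finset (Fin n)}
    (hw : ∀ x, w x = if x ∈ A then some (σ x) else none) :
    w = (sortPerm A).toPEquiv * egen n #A * (σ * (sortPerm A)⁻¹).toPEquiv :=
  PEquiv.ext fun x => by
    rw [hw, toPEquiv_mul_egen_mul_toPEquiv_apply]
    simp [sortPerm_lt_card_iff]

lemma exists_perm_extending (w : Rook n) :
    ∃ σ : Perm (Fin n), ∀ x, (w x).isSome → w x = some (σ x) := by
  obtain ⟨σ, hσ⟩ := Perm.exists_extending_pair (α := {x // (w x).isSome}) Subtype.val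
    (fun x => (w x).get x.2) Subtype.val_injective
    fun x y h => Subtype.ext <| w.inj (Option.get_mem x.2) <| by
      beta_reduce at h
      exact h ▸ Option.get_mem y.2
  exact ⟨σ, fun x hx => by rw [(hσ ⟨x, hx⟩ : σ x = _), Option.some_get]⟩

theorem exists_eq_toPEquiv_mul_egen_mul_toPEquiv (w : Rook n) :
    ∃ j ≤ n, ∃ w₁ w₂ : Perm (Fin n), w = w₁.toPEquiv * egen n j * w₂.toPEquiv := by
  obtain ⟨σ, hσ⟩ := exists_perm_extending w
  set A : Finset (Fin n) := {x | (w x).isSome}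
  refine ⟨#A, (card_le_univ _).trans_eq (Fintype.card_fin n), sortPerm A, σ * (sortPerm A)⁻¹,
    eq_sortPerm_mul_egen_card_mul fun x => ?_⟩
  split_ifs with hx
  · exact hσ x (by simpa [A] using hx)
  · exact Option.not_isSome_iff_eq_none.1 (by simpa [A] using hx)

lemma egen_mul_toPEquiv_mul_egen (m j : ℕ) (σ : Perm (Fin n)) :
    ∃ k ≤ n, ∃ u v : Perm (Fin n),
      egen n m * σ.toPEquiv * egen n j = u.toPEquiv * egen n k * v.toPEquiv ∧
      coxLength n u + coxLength n v ≤ coxLength n σ := by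
  set A : Finset (Fin n) := {x | (x : ℕ) < m ∧ (σ x : ℕ) < j} with hA
  refine ⟨#A, (card_le_univ _).trans_eq (Fintype.card_fin n), sortPerm A, σ * (sortPerm A)⁻¹,
    eq_sortPerm_mul_egen_card_mul fun x => ?_, ?_⟩
  · simp only [mul_apply, egen_apply, toPEquiv_apply, hA, mem_filter, mem_univ,
      true_and]
    split_ifs <;> simp_all [egen_apply]
  · have hsub : inversions (sortPerm A) ⊆ inversions (σ * (sortPerm A)⁻¹ * sortPerm A) := by
      rintro ⟨x, y⟩ h
      obtain ⟨hx, hy⟩ := mem_of_mem_inversions_sortPerm h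
      have hxy : x < y := (mem_inversions.1 h).1
      simp only [hA, mem_filter, mem_univ, true_and, not_and, not_lt] at hx hy
      rw [inv_mul_cancel_right, mem_inversions]
      refine ⟨hxy, Fin.lt_def.2 ?_⟩
      rw [Fin.lt_def] at hxy
      have := hx (by omega)
      dsimp only
      omega
    simpa [add_comm] using coxLength_add_le_of_inversions_subset hsub

lemma isSGen_swap {a b : Fin n} (hab : (b : ℕ) = a + 1) : IsSGen n (swap a b).toPEquiv :=
  ⟨b, by omega, by omega, by rw [sgen]; congr; ext; simp; omega⟩

lemma exists_swap_of_isSGen {x : Rook n} (hx : IsSGen n x) :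
    ∃ a b : Fin n, (b : ℕ) = a + 1 ∧ x = (swap a b).toPEquiv := by
  obtain ⟨i, h1, h2, rfl⟩ := hx
  exact ⟨_, _, by simp only; omega, rfl⟩

lemma not_isSGen_egen {j : ℕ} (hj : j < n) : ¬ IsSGen n (egen n j) := fun hs => by
  obtain ⟨a, b, -, h⟩ := exists_swap_of_isSGen hs
  have := DFunLike.congr_fun h ⟨n - 1, by omega⟩
  rw [egen_apply, if_neg (by simp only; omega), toPEquiv_apply] at this
  exact Option.some_ne_none _ this.symm

def IsRookWord (n : ℕ) (l : List (Rook n)) : Prop := ∀ x ∈ l, IsSGen n x ∨ IsEGen n x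

noncomputable def wordWeight (l : List (Rook n)) : ℕ := (l.map (wt n)).sum

lemma wordWeight_cons (x : Rook n) (l : List (Rook n)) :
    wordWeight (x :: l) = wt n x + wordWeight l := by
  simp [wordWeight]

lemma wordWeight_append (l₁ l₂ : List (Rook n)) :
    wordWeight (l₁ ++ l₂) = wordWeight l₁ + wordWeight l₂ := by
  simp [wordWeight]

lemma wordWeight_eq_length {l : List (Rook n)} (hl : ∀ x ∈ l, IsSGen n x) :
    wordWeight l = l.length := by
  rw [wordWeight, List.map_congr_left (f := wt n) (g := fun _ => 1) fun x hx => if_pos (hl x hx)]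
  simp

lemma rookLength_prod_le {l : List (Rook n)} (hl : IsRookWord n l) :
    rookLength n l.prod ≤ wordWeight l :=
  Nat.sInf_le ⟨l, hl, rfl, rfl⟩

lemma exists_sgen_word (p : Perm (Fin n)) :
    ∃ l : List (Rook n), (∀ x ∈ l, IsSGen n x) ∧ l.prod = p.toPEquiv ∧
      l.length ≤ coxLength n p := by
  induction h : coxLength n p using Nat.strong_induction_on generalizing p with
  | _ k ih =>
    by_cases hp : p = 1
    · exact ⟨[], by simp, by simp [hp]; rfl, by simp⟩
    obtain ⟨a, b, hab, hd⟩ := exists_descent hp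
    have hlt := coxLength_mul_swap_lt hab hd
    obtain ⟨l, hl, hprod, hlen⟩ := ih _ (h ▸ hlt) (p * swap a b) rfl
    refine ⟨(swap a b).toPEquiv :: l, ?_, ?_, ?_⟩
    · simpa [isSGen_swap hab] using hl
    · rw [List.prod_cons, hprod, toPEquiv_mul_toPEquiv, mul_assoc, swap_mul_self, mul_one]
    · simp only [List.length_cons]
      omega

lemma exists_word_egen {j : ℕ} (hj : j ≤ n) :
    ∃ l : List (Rook n), IsRookWord n l ∧ l.prod = egen n j ∧ wordWeight l = 0 := by
  rcases hj.lt_or_eq with hj | rfl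
  · refine ⟨[egen n j], ?_, by simp, by simp [wordWeight, wt, not_isSGen_egen hj]⟩
    simpa [IsRookWord] using Or.inr ⟨j, by omega, rfl⟩
  · exact ⟨[], by simp [IsRookWord], by simp [egen_self], rfl⟩

lemma exists_word_toPEquiv_mul_egen_mul_toPEquiv {j : ℕ} (hj : j ≤ n) (w₁ w₂ : Perm (Fin n)) :
    ∃ l : List (Rook n), IsRookWord n l ∧ l.prod = w₁.toPEquiv * egen n j * w₂.toPEquiv ∧
      wordWeight l ≤ coxLength n w₁ + coxLength n w₂ := by
  obtain ⟨l₁, hl₁, hprod₁, hlen₁⟩ := exists_sgen_word w₁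
  obtain ⟨l₂, hl₂, hprod₂, hlen₂⟩ := exists_sgen_word w₂
  obtain ⟨e, he, hprod, hweight⟩ := exists_word_egen hj
  refine ⟨l₁ ++ e ++ l₂, ?_, by simp [hprod₁, hprod, hprod₂, mul_assoc], ?_⟩
  · intro x hx
    rcases List.mem_append.1 hx with hx | hx
    · rcases List.mem_append.1 hx with hx | hx
      exacts [Or.inl (hl₁ x hx), he x hx]
    · exact Or.inl (hl₂ x hx)
  · rw [wordWeight_append, wordWeight_append, hweight, wordWeight_eq_length hl₁,
      wordWeight_eq_length hl₂]
    omega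

lemma rookLength_toPEquiv_mul_egen_mul_toPEquiv_le {j : ℕ} (hj : j ≤ n) (w₁ w₂ : Perm (Fin n)) :
    rookLength n (w₁.toPEquiv * egen n j * w₂.toPEquiv) ≤ coxLength n w₁ + coxLength n w₂ := by
  obtain ⟨l, hl, hprod, hweight⟩ := exists_word_toPEquiv_mul_egen_mul_toPEquiv hj w₁ w₂
  exact hprod ▸ (rookLength_prod_le hl).trans hweight

lemma exists_wordWeight_eq_rookLength (w : Rook n) :
    ∃ l : List (Rook n), IsRookWord n l ∧ l.prod = w ∧ wordWeight l = rookLength n w := by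
  obtain ⟨j, hj, w₁, w₂, hw⟩ := exists_eq_toPEquiv_mul_egen_mul_toPEquiv w
  obtain ⟨l, hl, hprod, -⟩ := exists_word_toPEquiv_mul_egen_mul_toPEquiv hj w₁ w₂
  have hne : {k | ∃ l, IsRookWord n l ∧ l.prod = w ∧ k = wordWeight l}.Nonempty :=
    ⟨_, l, hl, hprod.trans hw.symm, rfl⟩
  obtain ⟨l', hl', hprod', hweight⟩ := Nat.sInf_mem hne
  exact ⟨l', hl', hprod', hweight.symm⟩

lemma exists_factorization_of_isRookWord {l : List (Rook n)} (hl : IsRookWord n l) :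
    ∃ j ≤ n, ∃ w₁ w₂ : Perm (Fin n), l.prod = w₁.toPEquiv * egen n j * w₂.toPEquiv ∧
      coxLength n w₁ + coxLength n w₂ ≤ wordWeight l := by
  induction l with
  | nil => exact ⟨n, le_rfl, 1, 1, by simp [egen_self]; rfl, by simp [coxLength_one]⟩
  | cons g l ih =>
    obtain ⟨j, hj, w₁, w₂, hprod, hle⟩ := ih fun x hx => hl x (List.mem_cons_of_mem g hx)
    rw [List.prod_cons, hprod, wordWeight_cons]
    rcases hl g List.mem_cons_self with hg | ⟨m, -, rfl⟩
    · obtain ⟨a, b, hab, rfl⟩ := exists_swap_of_isSGen hg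
      refine ⟨j, hj, w₁ * swap a b, w₂, ?_, ?_⟩
      · rw [← mul_assoc, ← mul_assoc, toPEquiv_mul_toPEquiv]
      · have := coxLength_mul_le w₁ (swap a b)
        rw [coxLength_swap hab] at this
        rw [wt, if_pos (isSGen_swap hab)]
        omega
    · obtain ⟨k, hk, u, v, heq, hle'⟩ := egen_mul_toPEquiv_mul_egen m j w₁
      refine ⟨k, hk, u, w₂ * v, ?_, ?_⟩
      · rw [← mul_assoc, ← mul_assoc, heq, mul_assoc, toPEquiv_mul_toPEquiv]
      · have := coxLength_mul_le w₂ v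
        omega

end Rook

/-- Every element of the rook monoid factors as `w₁ · e_j · w₂` with `w₁, w₂`
permutations and `e_j` a partial identity on an initial segment, in such a way
that `ℓ(w) = ℓ(w₁) + ℓ(w₂)` where `ℓ` on permutations is the Coxeter length. -/
theorem rook_normal_form_length (n : ℕ) (w : Rook n) :
    ∃ j ≤ n, ∃ w₁ w₂ : Equiv.Perm (Fin n),
      w = w₁.toPEquiv * egen n j * w₂.toPEquiv ∧
      rookLength n w = coxLength n w₁ + coxLength n w₂ := by
  obtain ⟨l, hl, rfl, hweight⟩ := Rook.exists_wordWeight_eq_rookLength w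
  obtain ⟨j, hj, w₁, w₂, hprod, hle⟩ := Rook.exists_factorization_of_isRookWord hl
  refine ⟨j, hj, w₁, w₂, hprod, le_antisymm ?_ (hweight ▸ hle)⟩
  rw [hprod]
  exact Rook.rookLength_toPEquiv_mul_egen_mul_toPEquiv_le hj w₁ w₂
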